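/- arXiv:1404.1860 — 3 statements merged into one kernel-verified Lean document; each statement's English description precedes it below -/
import Mathlib

section
/- Let $n,m$ be nonnegative integers and $x$ a real (or formal) variable. If $0\le m\le n$ then $\sum_{j=0}^{n}\frac{(-n)_j}{j!}(-j)_m (x+j)_m = (-1)^m \frac{(x)_{2m}}{(x)_n}(-n)_m(-m)_{n-m}$, where $(a)_k$ denotes the Pochhammer symbol (rising factorial). If $m>n$, the left-hand sum equals zero. -/
/-!
Since `(-j)_m = 0` for `j < m`, only the indices `j = m + i`, `0 ≤ i ≤ n - m`, contribute.
With `(-a)_k = (-1)^k a (a - 1) ⋯ (a - k + 1)` the coefficient of such a term becomes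
`(-1)^i n (n - 1) ⋯ (n - m + 1) C(n - m, i)`, and
`(x)_n (x + m + i)_m = (x)_{2m} (x + 2m)_i (x + m + i)_{n-m-i}`. What remains is the
Chu–Vandermonde sum `∑ (-1)^i C(N, i) (b)_i (c + i)_{N-i} = (c - b)_N` at `b = x + 2m`,
`c = x + m`, `N = n - m`, which is Vandermonde's identity for falling factorials in
disguise.
-/

open Finset Polynomial Nat

theorem neg_one_pow_mul_neg_one_pow {M : Type*} [Monoid M] [HasDistribNeg M] (n : ℕ) :
    (-1 : M) ^ n * (-1) ^ n = 1 := by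
  rw [← pow_add, ← two_mul, pow_mul, neg_one_sq, one_pow]

theorem Nat.choose_add_mul_descFactorial (n m i : ℕ) :
    n.choose (m + i) * (m + i).descFactorial m = n.descFactorial m * (n - m).choose i := by
  have h := Nat.choose_mul (n := n) (k := m + i) (s := m) (Nat.le_add_right m i)
  rw [Nat.add_sub_cancel_left] at h
  simp only [Nat.descFactorial_eq_factorial_mul_choose]
  calc n.choose (m + i) * (m ! * (m + i).choose m)
      = m ! * (n.choose (m + i) * (m + i).choose m) := by ring
    _ = m ! * n.choose m * (n - m).choose i := by rw [h]; ring

section CommSemiring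

variable {R : Type*} [CommSemiring R]

theorem ascPochhammer_add_eval (a b : ℕ) (x : R) :
    (ascPochhammer R (a + b)).eval x =
      (ascPochhammer R a).eval x * (ascPochhammer R b).eval (x + a) := by
  rw [← ascPochhammer_mul, eval_mul, eval_comp]
  simp

theorem ascPochhammer_add_eval_mul_eval (m i l : ℕ) (x : R) :
    (ascPochhammer R (m + i + l)).eval x * (ascPochhammer R m).eval (x + (m + i : ℕ)) =
      (ascPochhammer R (2 * m)).eval x * (ascPochhammer R i).eval (x + (2 * m : ℕ)) *
        (ascPochhammer R l).eval (x + (m + i : ℕ)) := by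
  rw [ascPochhammer_add_eval (m + i), mul_right_comm, ← ascPochhammer_add_eval,
    show m + i + m = 2 * m + i by ring, ascPochhammer_add_eval (2 * m)]

end CommSemiring

section CommRing

variable {R : Type*} [CommRing R]

theorem ascPochhammer_eval_neg_natCast (a k : ℕ) :
    (ascPochhammer R k).eval (-(a : R)) = (-1) ^ k * a.descFactorial k := by
  rw [ascPochhammer_eval_neg_eq_descPochhammer, descPochhammer_eval_eq_descFactorial]

theorem descPochhammer_smeval_eq_eval (k : ℕ) (r : R) :
    (descPochhammer ℤ k).smeval r = (descPochhammer R k).eval r := by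
  rw [← aeval_eq_smeval, aeval_def, ← eval_map, descPochhammer_map]

theorem ascPochhammer_eval_sub_eq_sum (N : ℕ) (b c : R) :
    (ascPochhammer R N).eval (c - b) =
      ∑ i ∈ range (N + 1), (-1) ^ i * (N.choose i : R) * (ascPochhammer R i).eval b *
        (ascPochhammer R (N - i)).eval (c + i) := by
  -- Vandermonde for falling factorials at `-b` and `c + N - 1`; the falling factorials of
  -- these are `(-1)^i (b)_i` and `(c + i)_{N-i}`.
  have h := Ring.descPochhammer_smeval_add (r := -b) (s := c + N - 1) N (Commute.all _ _)
  simp only [descPochhammer_smeval_eq_eval] at h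
  rw [Finset.Nat.sum_antidiagonal_eq_sum_range_succ (fun i j => (N.choose i : R) *
    ((descPochhammer R i).eval (-b) * (descPochhammer R j).eval (c + N - 1))),
    descPochhammer_eval_eq_ascPochhammer, show -b + (c + N - 1) - N + 1 = c - b by ring] at h
  refine h.trans (sum_congr rfl fun i hi => ?_)
  have hi : i ≤ N := Nat.lt_succ_iff.mp (mem_range.mp hi)
  have hb : (-1) ^ i * (ascPochhammer R i).eval b = (descPochhammer R i).eval (-b) := by
    rw [← neg_neg b, ascPochhammer_eval_neg_eq_descPochhammer, neg_neg, ← mul_assoc,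
      neg_one_pow_mul_neg_one_pow, one_mul]
  have hc : c + (N : R) - 1 - ((N - i : ℕ) : R) + 1 = c + i := by
    push_cast [Nat.cast_sub hi]
    ring
  rw [descPochhammer_eval_eq_ascPochhammer R (c + N - 1), hc, ← hb]
  ring

end CommRing

section Field

variable {K : Type*} [Field K] [CharZero K]

theorem ascPochhammer_eval_neg_natCast_div_factorial (n j : ℕ) :
    (ascPochhammer K j).eval (-(n : K)) / (j ! : K) = (-1) ^ j * n.choose j := by
  have : (j ! : K) ≠ 0 := Nat.cast_ne_zero.mpr j.factorial_ne_zero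
  rw [ascPochhammer_eval_neg_natCast, Nat.descFactorial_eq_factorial_mul_choose]
  push_cast
  field_simp

theorem summand_mul_ascPochhammer_eval {n m i : ℕ} (h : m + i ≤ n) (x : K) :
    (ascPochhammer K (m + i)).eval (-(n : K)) / ((m + i) ! : K) *
        (ascPochhammer K m).eval (-((m + i : ℕ) : K)) *
        (ascPochhammer K m).eval (x + ((m + i : ℕ) : K)) * (ascPochhammer K n).eval x =
      n.descFactorial m * (ascPochhammer K (2 * m)).eval x *
        ((-1) ^ i * ((n - m).choose i : K) * (ascPochhammer K i).eval (x + 2 * m) *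
          (ascPochhammer K (n - m - i)).eval (x + m + i)) := by
  obtain ⟨l, rfl⟩ : ∃ l, n = m + i + l := ⟨n - (m + i), by omega⟩
  have hchoose : ((m + i + l).choose (m + i) : K) * (m + i).descFactorial m =
      (m + i + l).descFactorial m * ((m + i + l - m).choose i : K) := by
    exact_mod_cast Nat.choose_add_mul_descFactorial (m + i + l) m i
  rw [show m + i + l - m = i + l by omega] at hchoose ⊢
  rw [Nat.add_sub_cancel_left, ascPochhammer_eval_neg_natCast_div_factorial,
    ascPochhammer_eval_neg_natCast]
  have hpoly := ascPochhammer_add_eval_mul_eval m i l x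
  push_cast at hpoly ⊢
  simp only [← add_assoc] at hpoly ⊢
  -- the sign `(-1)^(m+i) (-1)^m` collapses to `(-1)^i`
  linear_combination
    (-1) ^ i * ((m + i + l).choose (m + i) * (m + i).descFactorial m : K) *
        (ascPochhammer K (m + i + l)).eval x * (ascPochhammer K m).eval (x + m + i) *
        neg_one_pow_mul_neg_one_pow (M := K) m +
      (-1) ^ i * (ascPochhammer K (m + i + l)).eval x *
        (ascPochhammer K m).eval (x + m + i) * hchoose +
      (-1) ^ i * ((m + i + l).descFactorial m * (i + l).choose i : K) * hpoly

end Field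

/-- Pochhammer (rising factorial) sum lemma: for `0 ≤ m ≤ n`,
`∑_{j=0}^{n} (-n)_j / j! * (-j)_m * (x+j)_m = (-1)^m (x)_{2m} / (x)_n * (-n)_m * (-m)_{n-m}`
(stated multiplied through by `(x)_n`, as a polynomial identity in `x`),
and the sum vanishes when `m > n`. -/
theorem stmt0 (n m : ℕ) (x : ℝ) :
    (m ≤ n →
      (∑ j ∈ Finset.range (n + 1),
          (ascPochhammer ℝ j).eval (-(n : ℝ)) / (j.factorial : ℝ) *
            (ascPochhammer ℝ m).eval (-(j : ℝ)) *
            (ascPochhammer ℝ m).eval (x + (j : ℝ))) * (ascPochhammer ℝ n).eval x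
        = (-1 : ℝ) ^ m * (ascPochhammer ℝ (2 * m)).eval x *
            (ascPochhammer ℝ m).eval (-(n : ℝ)) *
            (ascPochhammer ℝ (n - m)).eval (-(m : ℝ))) ∧
    (n < m →
      (∑ j ∈ Finset.range (n + 1),
          (ascPochhammer ℝ j).eval (-(n : ℝ)) / (j.factorial : ℝ) *
            (ascPochhammer ℝ m).eval (-(j : ℝ)) *
            (ascPochhammer ℝ m).eval (x + (j : ℝ))) = 0) := by
  have vanish : ∀ j < m, (ascPochhammer ℝ m).eval (-(j : ℝ)) = 0 :=
    fun j hj => ascPochhammer_eval_neg_coe_nat_of_lt hj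
  refine ⟨fun hmn => ?_, fun hnm => sum_eq_zero fun j hj => ?_⟩
  · rw [← sum_range_add_sum_Ico _ (by omega : m ≤ n + 1),
      sum_eq_zero fun j hj => by rw [vanish j (mem_range.1 hj), mul_zero, zero_mul],
      zero_add, sum_Ico_eq_sum_range, show n + 1 - m = n - m + 1 by omega, sum_mul,
      sum_congr rfl fun i hi => summand_mul_ascPochhammer_eval (by
        have := mem_range.1 hi; omega) x,
      ← mul_sum, ← ascPochhammer_eval_sub_eq_sum, ascPochhammer_eval_neg_natCast,
      show x + m - (x + 2 * m) = -(m : ℝ) by ring]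
    linear_combination (-(n.descFactorial m : ℝ) * (ascPochhammer ℝ (2 * m)).eval x *
      (ascPochhammer ℝ (n - m)).eval (-(m : ℝ))) * neg_one_pow_mul_neg_one_pow (M := ℝ) m
  · rw [vanish j (by have := mem_range.1 hj; omega), mul_zero, zero_mul]
end

section
/- Let $f$ be a probability density function supported on $[a,b]$ with $a<0<b$, and let $\gamma>0$. Define $M(\gamma)f(x) = \gamma x^{\gamma-1}\int_x^b f(t)t^{-\gamma}\,dt$ for $0<x<b$ and $M(\gamma)f(x)=\gamma|x|^{\gamma-1}\int_a^x f(t)|t|^{-\gamma}\,dt$ for $a<x<0$. Then for every nonnegative integer $n$: $\int_0^b x^n M(\gamma)f(x)\,dx = \frac{\gamma}{\gamma+n}\int_0^b x^n f(x)\,dx$ and $\int_a^0 x^n M(\gamma)f(x)\,dx = \frac{\gamma}{\gamma+n}\int_a^0 x^n f(x)\,dx$; in particular $M(\gamma)f$ is a probability density and its $n$-th moment equals $\frac{\gamma}{\gamma+n}$ times the $n$-th moment of $f$. -/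
/-!
For `x > 0`, `M(γ)f(x) = γ x^(γ-1) ∫_x^b f(t) t^(-γ) dt`, so by Fubini on the triangle
`0 < x < t < b` the `p`-th moment of `M(γ)f` on `(0, b]` equals
`∫_0^b f(t) t^(-γ) (∫_0^t γ x^(γ+p-1) dx) dt = γ/(γ+p) ∫_0^b t^p f(t) dt`.
The reflection `t ↦ -t` turns the branch on `[a, 0]` into the same transform of `f(-·)` on
`[0, -a]`, and the total mass is the moment of order `0`.
-/

open MeasureTheory intervalIntegral Set

/-- The transform `M(γ)f`: `γ x^{γ-1} ∫_x^b f(t) t^{-γ} dt` for `x > 0`,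
and `γ |x|^{γ-1} ∫_a^x f(t) |t|^{-γ} dt` for `x ≤ 0`. -/
noncomputable def Mgamma (γ a b : ℝ) (f : ℝ → ℝ) (x : ℝ) : ℝ :=
  if 0 < x then γ * x ^ (γ - 1) * ∫ t in x..b, f t * t ^ (-γ)
  else γ * |x| ^ (γ - 1) * ∫ t in a..x, f t * |t| ^ (-γ)

theorem integral_mul_integral_triangle_swap {a c : ℝ} {u v : ℝ → ℝ} (hac : a ≤ c)
    (hu : IntervalIntegrable u volume a c) (hv : IntervalIntegrable v volume a c) :
    ∫ x in a..c, u x * ∫ t in x..c, v t = ∫ t in a..c, v t * ∫ x in a..t, u x := by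
  rw [intervalIntegrable_iff_integrableOn_Ioc_of_le hac] at hu hv
  set μ := volume.restrict (Ioc a c)
  set F : ℝ × ℝ → ℝ := {q | q.1 < q.2}.indicator fun q => u q.1 * v q.2
  have hF : Integrable F (μ.prod μ) :=
    (hu.mul_prod hv).indicator (measurableSet_lt measurable_fst measurable_snd)
  have h_left : ∀ x ∈ Ioc a c, ∫ t, F (x, t) ∂μ = u x * ∫ t in x..c, v t := by
    intro x hx
    have : (fun t => F (x, t)) = (Ioi x).indicator fun t => u x * v t := by
      ext t; by_cases h : x < t <;> simp [F, h]
    rw [this, setIntegral_indicator measurableSet_Ioi, Ioc_inter_Ioi, max_eq_right hx.1.le,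
      MeasureTheory.integral_const_mul, integral_of_le hx.2]
  have h_right : ∀ t ∈ Ioc a c, ∫ x, F (x, t) ∂μ = v t * ∫ x in a..t, u x := by
    intro t ht
    have : (fun x => F (x, t)) = (Iio t).indicator fun x => v t * u x := by
      ext x; by_cases h : x < t <;> simp [F, h, mul_comm]
    have hIoo : Ioc a c ∩ Iio t = Ioo a t := by
      ext x; simp only [mem_inter_iff, mem_Ioc, mem_Iio, mem_Ioo]; grind [ht.2]
    rw [this, setIntegral_indicator measurableSet_Iio, hIoo, MeasureTheory.integral_const_mul,
      integral_of_le ht.1.le, integral_Ioc_eq_integral_Ioo]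
  calc ∫ x in a..c, u x * ∫ t in x..c, v t = ∫ x, ∫ t, F (x, t) ∂μ ∂μ := by
        rw [integral_of_le hac]; exact (setIntegral_congr_fun measurableSet_Ioc h_left).symm
    _ = ∫ t, ∫ x, F (x, t) ∂μ ∂μ := integral_integral_swap hF
    _ = ∫ t in a..c, v t * ∫ x in a..t, u x := by
        rw [integral_of_le hac]; exact setIntegral_congr_fun measurableSet_Ioc h_right

noncomputable def MgammaPos (γ c : ℝ) (g : ℝ → ℝ) (x : ℝ) : ℝ :=
  γ * x ^ (γ - 1) * ∫ t in x..c, g t * t ^ (-γ)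

section MgammaPos

variable {γ c : ℝ} {g : ℝ → ℝ}

theorem intervalIntegrable_MgammaPos (hγ : 0 < γ)
    (hg : IntervalIntegrable (fun t => g t * t ^ (-γ)) volume 0 c) :
    IntervalIntegrable (MgammaPos γ c g) volume 0 c :=
  ((intervalIntegrable_rpow' (by linarith : -1 < γ - 1)).const_mul γ).mul_continuousOn
    (continuousOn_primitive_interval_left ((intervalIntegrable_iff').mp hg))

theorem rpow_mul_MgammaPos {p x : ℝ} (hx : 0 < x) :
    x ^ p * MgammaPos γ c g x = γ * x ^ (γ + p - 1) * ∫ t in x..c, g t * t ^ (-γ) := by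
  rw [MgammaPos, add_sub_right_comm, Real.rpow_add hx]
  ring

theorem integral_rpow_mul_MgammaPos {p : ℝ} (hp : 0 < γ + p) (hc : 0 ≤ c)
    (hg : IntervalIntegrable (fun t => g t * t ^ (-γ)) volume 0 c) :
    ∫ x in 0..c, x ^ p * MgammaPos γ c g x = γ / (γ + p) * ∫ x in 0..c, x ^ p * g x := by
  have hu : IntervalIntegrable (fun x => γ * x ^ (γ + p - 1)) volume 0 c :=
    (intervalIntegrable_rpow' (by linarith)).const_mul γ
  have h_inner : ∀ t > 0, g t * t ^ (-γ) * ∫ x in 0..t, γ * x ^ (γ + p - 1)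
      = γ / (γ + p) * (t ^ p * g t) := by
    intro t ht
    rw [intervalIntegral.integral_const_mul, integral_rpow (Or.inl (by linarith)), sub_add_cancel,
      Real.zero_rpow hp.ne']
    have : t ^ (-γ) * t ^ (γ + p) = t ^ p := by rw [← Real.rpow_add ht]; ring_nf
    field_simp
    linear_combination γ * g t * this
  calc ∫ x in 0..c, x ^ p * MgammaPos γ c g x
      = ∫ x in 0..c, γ * x ^ (γ + p - 1) * ∫ t in x..c, g t * t ^ (-γ) :=
        integral_congr_uIoo fun x hx => rpow_mul_MgammaPos (by simp_all)
    _ = ∫ t in 0..c, g t * t ^ (-γ) * ∫ x in 0..t, γ * x ^ (γ + p - 1) :=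
        integral_mul_integral_triangle_swap hc hu hg
    _ = ∫ t in 0..c, γ / (γ + p) * (t ^ p * g t) :=
        integral_congr_uIoo fun t ht => h_inner t (by simp_all)
    _ = γ / (γ + p) * ∫ x in 0..c, x ^ p * g x := intervalIntegral.integral_const_mul _ _

theorem MgammaPos_nonneg {x : ℝ} (hγ : 0 ≤ γ) (hg : ∀ t, 0 ≤ g t) (hgc : ∀ t, c < t → g t = 0)
    (hx : 0 ≤ x) : 0 ≤ MgammaPos γ c g x := by
  have h_int : 0 ≤ ∫ t in x..c, g t * t ^ (-γ) := by
    rcases le_or_gt x c with hxc | hcx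
    · exact integral_nonneg hxc fun t ht => mul_nonneg (hg t) (Real.rpow_nonneg (hx.trans ht.1) _)
    · rw [integral_symm, integral_of_le hcx.le,
        setIntegral_eq_zero_of_forall_eq_zero fun t ht => by simp [hgc t ht.1], neg_zero]
  unfold MgammaPos
  have := Real.rpow_nonneg hx (γ - 1)
  positivity

end MgammaPos

section Mgamma

variable {γ a b : ℝ} {f : ℝ → ℝ}

theorem Mgamma_of_pos {x : ℝ} (hx : 0 < x) : Mgamma γ a b f x = MgammaPos γ b f x := if_pos hx

theorem Mgamma_neg {x : ℝ} (ha : a ≤ 0) (hx : 0 ≤ x) :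
    Mgamma γ a b f (-x) = MgammaPos γ (-a) (fun t => f (-t)) x := by
  have h_inner : ∫ t in a..-x, f t * |t| ^ (-γ) = ∫ t in x..-a, f (-t) * t ^ (-γ) := by
    rw [← neg_neg a, ← integral_comp_neg, neg_neg]
    refine integral_congr fun t ht => ?_
    have : 0 ≤ t := le_trans (le_min hx (by linarith)) ht.1
    simp only [abs_neg, abs_of_nonneg this]
  rw [Mgamma, if_neg (by linarith), abs_neg, abs_of_nonneg hx, h_inner, MgammaPos]

theorem intervalIntegrable_mul_rpow_of_abs_zero_right
    (h : IntervalIntegrable (fun t => f t * |t| ^ (-γ)) volume 0 b) (hb : 0 ≤ b) :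
    IntervalIntegrable (fun t => f t * t ^ (-γ)) volume 0 b :=
  h.congr fun t ht => by
    rw [uIoc_of_le hb] at ht
    simp only [abs_of_pos ht.1]

theorem intervalIntegrable_mul_rpow_of_abs_left_zero
    (h : IntervalIntegrable (fun t => f t * |t| ^ (-γ)) volume a 0) (ha : a ≤ 0) :
    IntervalIntegrable (fun t => f (-t) * t ^ (-γ)) volume 0 (-a) := by
  have := ((IntervalIntegrable.iff_comp_neg).mp h).symm
  rw [neg_zero] at this
  refine this.congr fun t ht => ?_
  rw [uIoc_of_le (by linarith)] at ht
  simp only [abs_neg, abs_of_pos ht.1]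

theorem intervalIntegrable_Mgamma (ha : a ≤ 0) (hb : 0 ≤ b) (hγ : 0 < γ)
    (hf : IntervalIntegrable (fun t => f t * |t| ^ (-γ)) volume a b) :
    IntervalIntegrable (Mgamma γ a b f) volume a b := by
  have h0 : (0 : ℝ) ∈ uIcc a b := mem_uIcc_of_le ha hb
  have h_left : IntervalIntegrable (Mgamma γ a b f) volume a 0 := by
    have := intervalIntegrable_MgammaPos hγ
      (intervalIntegrable_mul_rpow_of_abs_left_zero (hf.mono_set (uIcc_subset_uIcc_left h0)) ha)
    rw [IntervalIntegrable.iff_comp_neg, neg_zero]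
    exact (this.congr_uIoo fun x hx => (Mgamma_neg ha (by simp_all : 0 < x).le).symm).symm
  have h_right : IntervalIntegrable (Mgamma γ a b f) volume 0 b :=
    (intervalIntegrable_MgammaPos hγ (intervalIntegrable_mul_rpow_of_abs_zero_right
      (hf.mono_set (uIcc_subset_uIcc_right h0)) hb)).congr_uIoo
      fun x hx => (Mgamma_of_pos (by simp_all)).symm
  exact h_left.trans h_right

theorem integral_pow_mul_Mgamma_zero_right (n : ℕ) (hγ : 0 < γ + n) (hb : 0 ≤ b)
    (hf : IntervalIntegrable (fun t => f t * |t| ^ (-γ)) volume 0 b) :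
    ∫ x in 0..b, x ^ n * Mgamma γ a b f x = γ / (γ + n) * ∫ x in 0..b, x ^ n * f x := by
  have := integral_rpow_mul_MgammaPos hγ hb (intervalIntegrable_mul_rpow_of_abs_zero_right hf hb)
  simp only [Real.rpow_natCast] at this
  rw [← this]
  exact integral_congr_uIoo fun x hx => by rw [Mgamma_of_pos (by simp_all)]

theorem integral_pow_mul_comp_neg (n : ℕ) (h : ℝ → ℝ) :
    ∫ x in a..0, x ^ n * h x = (-1) ^ n * ∫ x in 0..-a, x ^ n * h (-x) := by
  rw [← intervalIntegral.integral_const_mul]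
  simp_rw [← mul_assoc, ← mul_pow, neg_one_mul]
  rw [integral_comp_neg (fun x => x ^ n * h x), neg_neg, neg_zero]

theorem integral_pow_mul_Mgamma_left_zero (n : ℕ) (hγ : 0 < γ + n) (ha : a ≤ 0)
    (hf : IntervalIntegrable (fun t => f t * |t| ^ (-γ)) volume a 0) :
    ∫ x in a..0, x ^ n * Mgamma γ a b f x = γ / (γ + n) * ∫ x in a..0, x ^ n * f x := by
  have := integral_rpow_mul_MgammaPos hγ (by linarith)
    (intervalIntegrable_mul_rpow_of_abs_left_zero hf ha)
  simp only [Real.rpow_natCast] at this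
  rw [integral_pow_mul_comp_neg, integral_pow_mul_comp_neg, mul_left_comm, ← this]
  congr 1
  exact integral_congr fun x hx => by rw [Mgamma_neg ha (by simp_all)]

theorem Mgamma_nonneg (ha : a ≤ 0) (hγ : 0 ≤ γ) (hf : ∀ t, 0 ≤ f t)
    (hsupp : ∀ t, t ∉ Icc a b → f t = 0) (x : ℝ) : 0 ≤ Mgamma γ a b f x := by
  rcases lt_or_ge 0 x with hx | hx
  · rw [Mgamma_of_pos hx]
    exact MgammaPos_nonneg hγ hf (fun t ht => hsupp t fun h => by linarith [h.2]) hx.le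
  · rw [← neg_neg x, Mgamma_neg ha (neg_nonneg.mpr hx)]
    exact MgammaPos_nonneg hγ (fun t => hf _) (fun t ht => hsupp _ fun h => by linarith [h.1])
      (neg_nonneg.mpr hx)

end Mgamma

/-- If `f` is a probability density on `[a,b]` with `a < 0 < b`, `γ > 0`, and
`f(t)|t|^{-γ}` is integrable, then `M(γ)f` is a probability density whose moments
(separately on `[0,b]` and on `[a,0]`) are `γ/(γ+n)` times those of `f`. -/
theorem stmt4 (a b γ : ℝ) (f : ℝ → ℝ)
    (ha : a < 0) (hb : 0 < b) (hγ : 0 < γ)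
    (hf0 : ∀ x, 0 ≤ f x)
    (hsupp : ∀ x, x ∉ Set.Icc a b → f x = 0)
    (hint : IntervalIntegrable f volume a b)
    (hone : (∫ x in a..b, f x) = 1)
    (hintγ : IntervalIntegrable (fun t => f t * |t| ^ (-γ)) volume a b) :
    (∀ n : ℕ,
        (∫ x in (0:ℝ)..b, x ^ n * Mgamma γ a b f x)
          = γ / (γ + n) * ∫ x in (0:ℝ)..b, x ^ n * f x) ∧
    (∀ n : ℕ,
        (∫ x in a..(0:ℝ), x ^ n * Mgamma γ a b f x)
          = γ / (γ + n) * ∫ x in a..(0:ℝ), x ^ n * f x) ∧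
    (∀ x, 0 ≤ Mgamma γ a b f x) ∧
    ((∫ x in a..b, Mgamma γ a b f x) = 1) ∧
    (∀ n : ℕ,
        (∫ x in a..b, x ^ n * Mgamma γ a b f x)
          = γ / (γ + n) * ∫ x in a..b, x ^ n * f x) := by
  have h0 : (0 : ℝ) ∈ uIcc a b := mem_uIcc_of_le ha.le hb.le
  have hγn (n : ℕ) : 0 < γ + n := by positivity
  have h_right (n : ℕ) := integral_pow_mul_Mgamma_zero_right (a := a) n (hγn n) hb.le
    (hintγ.mono_set (uIcc_subset_uIcc_right h0))
  have h_left (n : ℕ) := integral_pow_mul_Mgamma_left_zero (b := b) n (hγn n) ha.le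
    (hintγ.mono_set (uIcc_subset_uIcc_left h0))
  have h_moment (n : ℕ) : ∫ x in a..b, x ^ n * Mgamma γ a b f x
      = γ / (γ + n) * ∫ x in a..b, x ^ n * f x := by
    have hM := (intervalIntegrable_Mgamma ha.le hb.le hγ hintγ).continuousOn_mul
      (continuousOn_pow (s := uIcc a b) n)
    have hf := hint.continuousOn_mul (continuousOn_pow (s := uIcc a b) n)
    rw [← integral_add_adjacent_intervals (hM.mono_set (uIcc_subset_uIcc_left h0))
        (hM.mono_set (uIcc_subset_uIcc_right h0)),
      ← integral_add_adjacent_intervals (hf.mono_set (uIcc_subset_uIcc_left h0))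
        (hf.mono_set (uIcc_subset_uIcc_right h0)), h_left, h_right, mul_add]
  refine ⟨h_right, h_left, Mgamma_nonneg ha.le hγ.le hf0 hsupp, ?_, h_moment⟩
  simpa [hone, hγ.ne'] using h_moment 0
end

section
/- Let $f$ and $g$ be probability densities supported on a common bounded interval $[a,b]$ with $a<0<b$, and suppose there exist $\gamma_1,\gamma_2>0$ and $\delta\in(0,1)$ such that for all nonnegative integers $n$, $\frac{\gamma_1}{\gamma_1+n}\mu_n[g]=\frac{\gamma_2+\delta n}{\gamma_2+n}\mu_n[f]$, where $\mu_n[h]=\int_a^b x^n h(x)dx$. Then $\int_0^b g(x)\,dx = \int_0^b f(x)\,dx$, i.e., random variables with densities $f$ and $g$ have the same probability of being positive. -/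
/-!
Let `μ`, `ν` be the measures with densities `f`, `g`, and let `M(γ)` send the law of `X` to
the law of `X * U ^ (1 / γ)` with `U` uniform on `(0, 1]` and independent of `X`. Then `M(γ)`
keeps the support inside `[a, b]` (as `a < 0 < b`), keeps the mass of `(0, ∞)` and multiplies
the `n`-th moment by `γ / (γ + n)`. The hypothesis therefore says that `M(γ₁) ν` and the mixture
`δ μ + (1 - δ) M(γ₂) μ` have the same moments; being supported on `[a, b]`, they are equal by
the Weierstrass approximation theorem. Comparing the masses of `(0, ∞)` gives the claim.
-/

open MeasureTheory intervalIntegral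
open Set Filter Topology Polynomial

lemma Continuous.integrable_of_ae_mem {μ : Measure ℝ} [IsFiniteMeasure μ] {K : Set ℝ}
    (hK : IsCompact K) (hμ : ∀ᵐ x ∂μ, x ∈ K) {φ : ℝ → ℝ} (hφ : Continuous φ) :
    Integrable φ μ := by
  rw [← Measure.restrict_eq_self_of_ae_mem hμ]
  exact hφ.continuousOn.integrableOn_compact hK

section Moments

variable {μ ν : Measure ℝ} [IsFiniteMeasure μ] [IsFiniteMeasure ν]

lemma integral_eval_eq_of_moments_eq {K : Set ℝ} (hK : IsCompact K)
    (hμ : ∀ᵐ x ∂μ, x ∈ K) (hν : ∀ᵐ x ∂ν, x ∈ K)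
    (h : ∀ n : ℕ, ∫ x, x ^ n ∂μ = ∫ x, x ^ n ∂ν) (p : ℝ[X]) :
    ∫ x, p.eval x ∂μ = ∫ x, p.eval x ∂ν := by
  induction p using Polynomial.induction_on' with
  | add p q hp hq =>
    simp only [eval_add]
    rw [integral_add (p.continuous.integrable_of_ae_mem hK hμ)
        (q.continuous.integrable_of_ae_mem hK hμ),
      integral_add (p.continuous.integrable_of_ae_mem hK hν)
        (q.continuous.integrable_of_ae_mem hK hν), hp, hq]
  | monomial n c => simp only [eval_monomial, MeasureTheory.integral_const_mul, h n]

lemma integral_eq_of_moments_eq {a b : ℝ}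
    (hμ : ∀ᵐ x ∂μ, x ∈ Icc a b) (hν : ∀ᵐ x ∂ν, x ∈ Icc a b)
    (h : ∀ n : ℕ, ∫ x, x ^ n ∂μ = ∫ x, x ^ n ∂ν) {φ : ℝ → ℝ} (hφ : Continuous φ) :
    ∫ x, φ x ∂μ = ∫ x, φ x ∂ν := by
  have hbound : ∀ ε > 0, |∫ x, φ x ∂μ - ∫ x, φ x ∂ν| ≤ ε * (μ.real univ + ν.real univ) := by
    intro ε hε
    obtain ⟨p, hp⟩ := exists_polynomial_near_of_continuousOn a b φ hφ.continuousOn ε hε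
    have approx : ∀ (ρ : Measure ℝ) [IsFiniteMeasure ρ], (∀ᵐ x ∂ρ, x ∈ Icc a b) →
        |∫ x, φ x ∂ρ - ∫ x, p.eval x ∂ρ| ≤ ε * ρ.real univ := by
      intro ρ _ hρ
      rw [← integral_sub (hφ.integrable_of_ae_mem isCompact_Icc hρ)
        (p.continuous.integrable_of_ae_mem isCompact_Icc hρ), ← Real.norm_eq_abs]
      refine MeasureTheory.norm_integral_le_of_norm_le_const ?_
      filter_upwards [hρ] with x hx
      rw [Real.norm_eq_abs, abs_sub_comm]
      exact (hp x hx).le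
    calc |∫ x, φ x ∂μ - ∫ x, φ x ∂ν|
        = |(∫ x, φ x ∂μ - ∫ x, p.eval x ∂μ) - (∫ x, φ x ∂ν - ∫ x, p.eval x ∂ν)| := by
          rw [integral_eval_eq_of_moments_eq isCompact_Icc hμ hν h p, sub_sub_sub_cancel_right]
      _ ≤ ε * μ.real univ + ε * ν.real univ :=
          (abs_sub _ _).trans (add_le_add (approx μ hμ) (approx ν hν))
      _ = ε * (μ.real univ + ν.real univ) := (mul_add _ _ _).symm
  have hlim : Tendsto (fun ε => ε * (μ.real univ + ν.real univ)) (𝓝[>] 0) (𝓝 0) := by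
    simpa using ((continuous_mul_const (μ.real univ + ν.real univ)).tendsto 0).mono_left
      nhdsWithin_le_nhds
  have hzero : |∫ x, φ x ∂μ - ∫ x, φ x ∂ν| ≤ 0 :=
    ge_of_tendsto hlim (eventually_nhdsWithin_of_forall hbound)
  exact sub_eq_zero.1 (abs_nonpos_iff.1 hzero)

theorem Measure.ext_of_moments_eq {a b : ℝ}
    (hμ : ∀ᵐ x ∂μ, x ∈ Icc a b) (hν : ∀ᵐ x ∂ν, x ∈ Icc a b)
    (h : ∀ n : ℕ, ∫ x, x ^ n ∂μ = ∫ x, x ^ n ∂ν) : μ = ν :=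
  ext_of_forall_integral_eq_of_IsFiniteMeasure fun φ =>
    integral_eq_of_moments_eq hμ hν h φ.continuous

end Moments

section Density

variable {α : Type*} [MeasurableSpace α] {μ : Measure α} {f : α → ℝ}

lemma integral_withDensity_ofReal (hf : AEMeasurable f μ) (h0 : ∀ᵐ x ∂μ, 0 ≤ f x)
    (φ : α → ℝ) :
    ∫ x, φ x ∂μ.withDensity (fun x => ENNReal.ofReal (f x)) = ∫ x, f x * φ x ∂μ := by
  rw [integral_withDensity_eq_integral_toReal_smul₀ hf.ennreal_ofReal
    (ae_of_all _ fun _ => ENNReal.ofReal_lt_top)]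
  refine integral_congr_ae ?_
  filter_upwards [h0] with x hx
  rw [ENNReal.toReal_ofReal hx, smul_eq_mul]

lemma measureReal_withDensity_ofReal (hf : Integrable f μ) (h0 : ∀ᵐ x ∂μ, 0 ≤ f x)
    {s : Set α} (hs : MeasurableSet s) :
    (μ.withDensity fun x => ENNReal.ofReal (f x)).real s = ∫ x in s, f x ∂μ := by
  rw [measureReal_def, withDensity_apply _ hs,
    ← ofReal_integral_eq_lintegral_ofReal hf.integrableOn (ae_restrict_of_ae h0),
    ENNReal.toReal_ofReal (setIntegral_nonneg_of_ae_restrict (ae_restrict_of_ae h0))]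

lemma ae_withDensity_ofReal_mem (hf : AEMeasurable f μ) {s : Set α}
    (hs : ∀ x, x ∉ s → f x = 0) :
    ∀ᵐ x ∂μ.withDensity (fun x => ENNReal.ofReal (f x)), x ∈ s := by
  rw [ae_withDensity_iff' hf.ennreal_ofReal]
  refine ae_of_all _ fun x hx => ?_
  by_contra hxs
  simp [hs x hxs] at hx

end Density

section Interval

variable {f : ℝ → ℝ} {a b : ℝ}

lemma IntervalIntegrable.integrable_of_forall_compl_eq_zero (hab : a ≤ b)
    (hf : IntervalIntegrable f volume a b) (h0 : ∀ x, x ∉ Icc a b → f x = 0) :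
    Integrable f := by
  refine (integrableOn_iff_integrable_of_support_subset fun x hx => ?_).1
    ((intervalIntegrable_iff_integrableOn_Icc_of_le hab).1 hf)
  by_contra hxs
  exact hx (h0 x hxs)

lemma integral_eq_intervalIntegral_of_forall_compl_eq_zero (hab : a ≤ b)
    (h0 : ∀ x, x ∉ Icc a b → f x = 0) :
    ∫ x, f x = ∫ x in a..b, f x := by
  rw [intervalIntegral.integral_of_le hab, ← integral_Icc_eq_integral_Ioc,
    setIntegral_eq_integral_of_forall_compl_eq_zero h0]

lemma setIntegral_Ioi_eq_intervalIntegral (hab : a ≤ b) (h0 : ∀ x, b < x → f x = 0) :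
    ∫ x in Ioi a, f x = ∫ x in a..b, f x := by
  rw [intervalIntegral.integral_of_le hab]
  exact setIntegral_eq_of_subset_of_forall_sdiff_eq_zero measurableSet_Ioi Ioc_subset_Ioi_self
    fun x hx => h0 x (lt_of_not_ge fun hxb => hx.2 ⟨hx.1, hxb⟩)

end Interval

section MulConvolution

variable {μ κ : Measure ℝ}

lemma ae_mem_Icc_mconv {a b : ℝ} (ha : a ≤ 0) (hb : 0 ≤ b)
    (hμ : ∀ᵐ x ∂μ, x ∈ Icc a b) (hκ : ∀ᵐ u ∂κ, u ∈ Icc 0 1) :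
    ∀ᵐ x ∂(μ ∗ₘ κ), x ∈ Icc a b := by
  rw [Measure.mconv]
  refine (ae_map_iff (by fun_prop) measurableSet_Icc).2 ?_
  filter_upwards [Measure.quasiMeasurePreserving_fst.ae hμ,
    Measure.quasiMeasurePreserving_snd.ae hκ] with p ⟨hxa, hxb⟩ ⟨hu0, hu1⟩
  constructor <;> rcases le_total 0 p.1 with hx | hx <;> nlinarith

variable [SFinite κ]

lemma mconv_apply_Ioi_zero [IsProbabilityMeasure κ] (hκ : ∀ᵐ u ∂κ, 0 < u) :
    (μ ∗ₘ κ) (Ioi 0) = μ (Ioi 0) := by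
  have hpre : (fun p : ℝ × ℝ => p.1 * p.2) ⁻¹' Ioi 0 =ᵐ[μ.prod κ] Ioi 0 ×ˢ univ := by
    filter_upwards [Measure.quasiMeasurePreserving_snd.ae hκ] with p hp
    change (p.1 * p.2 ∈ Ioi 0) = (p ∈ Ioi 0 ×ˢ univ)
    simp [mul_pos_iff_of_pos_right hp]
  rw [Measure.mconv, Measure.map_apply (by fun_prop) measurableSet_Ioi, measure_congr hpre,
    Measure.prod_prod, measure_univ, mul_one]

variable [SFinite μ]

lemma integral_pow_mconv (n : ℕ) :
    ∫ x, x ^ n ∂(μ ∗ₘ κ) = (∫ x, x ^ n ∂μ) * ∫ u, u ^ n ∂κ := by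
  rw [Measure.mconv, integral_map (by fun_prop) (by fun_prop)]
  simp only [mul_pow]
  exact integral_prod_mul _ _

end MulConvolution

/-- The law of `U ^ (1 / γ)` for `U` uniform on `(0, 1]`: it has density `γ u ^ (γ - 1)` there. -/
noncomputable def powerLaw (γ : ℝ) : Measure ℝ :=
  (volume.restrict (Ioc 0 1)).map fun u => u ^ γ⁻¹

instance (γ : ℝ) : IsProbabilityMeasure (powerLaw γ) :=
  have : IsProbabilityMeasure (volume.restrict (Ioc (0 : ℝ) 1)) := ⟨by simp⟩
  Measure.isProbabilityMeasure_map (by fun_prop)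

lemma ae_mem_Ioc_powerLaw {γ : ℝ} (hγ : 0 ≤ γ) : ∀ᵐ u ∂powerLaw γ, u ∈ Ioc 0 1 := by
  refine (ae_map_iff (by fun_prop) measurableSet_Ioc).2 ?_
  refine (ae_restrict_iff' measurableSet_Ioc).2 (ae_of_all _ fun u hu => ?_)
  exact ⟨Real.rpow_pos_of_pos hu.1 _, Real.rpow_le_one hu.1.le hu.2 (inv_nonneg.2 hγ)⟩

lemma integral_pow_powerLaw {γ : ℝ} (hγ : 0 < γ) (n : ℕ) :
    ∫ u, u ^ n ∂powerLaw γ = γ / (γ + n) := by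
  have hexp : ∀ u : ℝ, 0 ≤ u → (u ^ γ⁻¹) ^ n = u ^ (γ⁻¹ * n) := fun u hu => by
    rw [← Real.rpow_natCast, ← Real.rpow_mul hu]
  rw [powerLaw, integral_map (by fun_prop) (by fun_prop),
    ← intervalIntegral.integral_of_le zero_le_one,
    intervalIntegral.integral_congr (g := fun u => u ^ (γ⁻¹ * n)) fun u hu =>
      hexp u (by rw [uIcc_of_le zero_le_one] at hu; exact hu.1),
    integral_rpow (Or.inl (neg_one_lt_zero.trans_le (by positivity))), Real.one_rpow,
    Real.zero_rpow (by positivity : γ⁻¹ * (n : ℝ) + 1 ≠ 0), sub_zero]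
  field_simp
  ring

section PowerLaw

variable {μ : Measure ℝ} {γ : ℝ}

lemma ae_mem_Icc_mconv_powerLaw {a b : ℝ} (ha : a ≤ 0) (hb : 0 ≤ b) (hγ : 0 ≤ γ)
    (hμ : ∀ᵐ x ∂μ, x ∈ Icc a b) : ∀ᵐ x ∂(μ ∗ₘ powerLaw γ), x ∈ Icc a b :=
  ae_mem_Icc_mconv ha hb hμ ((ae_mem_Ioc_powerLaw hγ).mono fun _ hu => Ioc_subset_Icc_self hu)

lemma mconv_powerLaw_apply_Ioi_zero [SFinite μ] (hγ : 0 ≤ γ) :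
    (μ ∗ₘ powerLaw γ) (Ioi 0) = μ (Ioi 0) :=
  mconv_apply_Ioi_zero ((ae_mem_Ioc_powerLaw hγ).mono fun _ hu => hu.1)

end PowerLaw

section Mixture

variable {α : Type*} [MeasurableSpace α] {μ ρ : Measure α} {δ : ℝ}

/-- `δ μ + (1 - δ) ρ`, with the weights truncated at `0` when `δ ∉ [0, 1]`. -/
noncomputable def mixture (δ : ℝ) (μ ρ : Measure α) : Measure α :=
  δ.toNNReal • μ + (1 - δ).toNNReal • ρ

instance [IsFiniteMeasure μ] [IsFiniteMeasure ρ] : IsFiniteMeasure (mixture δ μ ρ) := by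
  unfold mixture; infer_instance

lemma integral_mixture (hδ : 0 ≤ δ) (hδ1 : δ ≤ 1) {φ : α → ℝ} (hμ : Integrable φ μ)
    (hρ : Integrable φ ρ) :
    ∫ x, φ x ∂mixture δ μ ρ = δ * ∫ x, φ x ∂μ + (1 - δ) * ∫ x, φ x ∂ρ := by
  rw [mixture, integral_add_measure hμ.smul_measure_nnreal hρ.smul_measure_nnreal,
    integral_smul_nnreal_measure, integral_smul_nnreal_measure, NNReal.smul_def,
    NNReal.smul_def, Real.coe_toNNReal _ hδ, Real.coe_toNNReal _ (sub_nonneg.2 hδ1),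
    smul_eq_mul, smul_eq_mul]

lemma ae_mixture {p : α → Prop} (hμ : ∀ᵐ x ∂μ, p x) (hρ : ∀ᵐ x ∂ρ, p x) :
    ∀ᵐ x ∂mixture δ μ ρ, p x :=
  ae_add_measure_iff.2 ⟨Measure.ae_smul_measure hμ _, Measure.ae_smul_measure hρ _⟩

lemma mixture_apply_of_apply_eq (hδ : 0 ≤ δ) (hδ1 : δ ≤ 1) {s : Set α} (h : ρ s = μ s) :
    mixture δ μ ρ s = μ s := by
  rw [mixture, Measure.add_apply, Measure.smul_apply, Measure.smul_apply, h, ← add_smul,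
    ← Real.toNNReal_add hδ (sub_nonneg.2 hδ1), add_sub_cancel, Real.toNNReal_one, one_smul]

end Mixture

section DensityOnInterval

variable {f : ℝ → ℝ} {a b : ℝ}

lemma integral_pow_withDensity_ofReal (hab : a ≤ b) (hf : AEMeasurable f) (h0 : ∀ x, 0 ≤ f x)
    (hsupp : ∀ x, x ∉ Icc a b → f x = 0) (n : ℕ) :
    ∫ x, x ^ n ∂volume.withDensity (fun x => ENNReal.ofReal (f x))
      = ∫ x in a..b, x ^ n * f x := by
  rw [integral_withDensity_ofReal hf (ae_of_all _ h0),
    integral_eq_intervalIntegral_of_forall_compl_eq_zero hab fun x hx => by simp [hsupp x hx]]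
  simp only [mul_comm (f _)]

lemma measureReal_withDensity_ofReal_Ioi {c : ℝ} (hcb : c ≤ b) (hf : Integrable f)
    (h0 : ∀ x, 0 ≤ f x) (hsupp : ∀ x, x ∉ Icc a b → f x = 0) :
    (volume.withDensity fun x => ENNReal.ofReal (f x)).real (Ioi c) = ∫ x in c..b, f x := by
  rw [measureReal_withDensity_ofReal hf (ae_of_all _ h0) measurableSet_Ioi,
    setIntegral_Ioi_eq_intervalIntegral hcb fun x hx => hsupp x fun h => hx.not_ge h.2]

end DensityOnInterval

theorem stmt19_general (a b γ₁ γ₂ δ : ℝ) (f g : ℝ → ℝ)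
    (ha : a < 0) (hb : 0 < b)
    (hγ₁ : 0 < γ₁) (hγ₂ : 0 < γ₂) (hδ : 0 < δ) (hδ1 : δ < 1)
    (hf0 : ∀ x, 0 ≤ f x) (hg0 : ∀ x, 0 ≤ g x)
    (hfsupp : ∀ x, x ∉ Set.Icc a b → f x = 0)
    (hgsupp : ∀ x, x ∉ Set.Icc a b → g x = 0)
    (hfint : IntervalIntegrable f volume a b)
    (hgint : IntervalIntegrable g volume a b)
    (hmom : ∀ n : ℕ,
      γ₁ / (γ₁ + n) * ∫ x in a..b, x ^ n * g x
        = (γ₂ + δ * n) / (γ₂ + n) * ∫ x in a..b, x ^ n * f x) :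
    (∫ x in (0:ℝ)..b, g x) = ∫ x in (0:ℝ)..b, f x := by
  have hab : a ≤ b := by linarith
  have hfi := hfint.integrable_of_forall_compl_eq_zero hab hfsupp
  have hgi := hgint.integrable_of_forall_compl_eq_zero hab hgsupp
  set μ := volume.withDensity fun x => ENNReal.ofReal (f x)
  set ν := volume.withDensity fun x => ENNReal.ofReal (g x)
  have : IsFiniteMeasure μ := isFiniteMeasure_withDensity_ofReal hfi.2
  have : IsFiniteMeasure ν := isFiniteMeasure_withDensity_ofReal hgi.2
  have hμ : ∀ᵐ x ∂μ, x ∈ Icc a b := ae_withDensity_ofReal_mem hfi.aemeasurable hfsupp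
  have hν : ∀ᵐ x ∂ν, x ∈ Icc a b := ae_withDensity_ofReal_mem hgi.aemeasurable hgsupp
  have hμκ := ae_mem_Icc_mconv_powerLaw ha.le hb.le hγ₂.le hμ
  have hmix : ν ∗ₘ powerLaw γ₁ = mixture δ μ (μ ∗ₘ powerLaw γ₂) := by
    refine Measure.ext_of_moments_eq (ae_mem_Icc_mconv_powerLaw ha.le hb.le hγ₁.le hν)
      (ae_mixture hμ hμκ) fun n => ?_
    rw [integral_mixture hδ.le hδ1.le ((continuous_pow n).integrable_of_ae_mem isCompact_Icc hμ)
        ((continuous_pow n).integrable_of_ae_mem isCompact_Icc hμκ),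
      integral_pow_mconv, integral_pow_mconv, integral_pow_powerLaw hγ₁,
      integral_pow_powerLaw hγ₂, integral_pow_withDensity_ofReal hab hgi.aemeasurable hg0 hgsupp,
      integral_pow_withDensity_ofReal hab hfi.aemeasurable hf0 hfsupp, mul_comm, hmom n]
    field_simp
    ring
  have hpos : ν (Ioi 0) = μ (Ioi 0) := by
    rw [← mconv_powerLaw_apply_Ioi_zero hγ₁.le, hmix,
      mixture_apply_of_apply_eq hδ.le hδ1.le (mconv_powerLaw_apply_Ioi_zero hγ₂.le)]
  rw [← measureReal_withDensity_ofReal_Ioi hb.le hgi hg0 hgsupp,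
    ← measureReal_withDensity_ofReal_Ioi hb.le hfi hf0 hfsupp, measureReal_def,
    measureReal_def, hpos]

/-- If `f`, `g` are probability densities on a bounded interval `[a,b]` with `a < 0 < b`
whose moments satisfy `γ₁/(γ₁+n) μₙ[g] = (γ₂+δn)/(γ₂+n) μₙ[f]` for all `n ≥ 0` (with
`γ₁, γ₂ > 0`, `0 < δ < 1`), then `f` and `g` assign the same probability to `(0, b]`,
i.e. random variables with these densities are positive with equal probability. -/
theorem stmt19 (a b γ₁ γ₂ δ : ℝ) (f g : ℝ → ℝ)
    (ha : a < 0) (hb : 0 < b)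
    (hγ₁ : 0 < γ₁) (hγ₂ : 0 < γ₂) (hδ : 0 < δ) (hδ1 : δ < 1)
    (hf0 : ∀ x, 0 ≤ f x) (hg0 : ∀ x, 0 ≤ g x)
    (hfsupp : ∀ x, x ∉ Set.Icc a b → f x = 0)
    (hgsupp : ∀ x, x ∉ Set.Icc a b → g x = 0)
    (hfint : IntervalIntegrable f volume a b)
    (hgint : IntervalIntegrable g volume a b)
    (hfone : (∫ x in a..b, f x) = 1)
    (hgone : (∫ x in a..b, g x) = 1)
    (hmom : ∀ n : ℕ,
      γ₁ / (γ₁ + n) * ∫ x in a..b, x ^ n * g x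
        = (γ₂ + δ * n) / (γ₂ + n) * ∫ x in a..b, x ^ n * f x) :
    (∫ x in (0:ℝ)..b, g x) = ∫ x in (0:ℝ)..b, f x :=
  stmt19_general a b γ₁ γ₂ δ f g ha hb hγ₁ hγ₂ hδ hδ1 hf0 hg0 hfsupp hgsupp hfint hgint hmom
end
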